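/- arXiv:2505.20583 — 2 statements merged into one kernel-verified Lean document; each statement's English description precedes it below -/
import Mathlib

section
/- Let ρ0, ρ1 be probability measures on a measurable space X with ρ1 absolutely continuous with respect to ρ0, and let φ : X → {0,1} be measurable. Then P_{X∼ρ0}(φ(X)=1) + P_{X∼ρ1}(φ(X)=0) ≥ (1/2)·exp(−KL(ρ0‖ρ1)). -/
open MeasureTheory Real
open scoped ENNReal

/-- Test lower bound (Bubeck–Perchet–Rigollet, Lemma 4): for probability measures
ρ0, ρ1 with ρ1 ≪ ρ0 (and ρ0 ≪ ρ1 so that the KL divergence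
`∫ llr ρ0 ρ1 ∂ρ0` is the finite real-valued Kullback–Leibler divergence),
and a measurable test φ : X → {0,1},
P_{ρ0}(φ = 1) + P_{ρ1}(φ = 0) ≥ (1/2)·exp(−KL(ρ0‖ρ1)). -/
theorem test_lower_bound {X : Type*} [MeasurableSpace X]
    (ρ0 ρ1 : Measure X) [IsProbabilityMeasure ρ0] [IsProbabilityMeasure ρ1]
    (hac : ρ1 ≪ ρ0) (hac' : ρ0 ≪ ρ1)
    (hint : Integrable (llr ρ0 ρ1) ρ0)
    (φ : X → Bool) (hφ : Measurable φ) :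
    (ρ0 {x | φ x = true}).toReal + (ρ1 {x | φ x = false}).toReal ≥
      (1 / 2) * Real.exp (-(∫ x, llr ρ0 ρ1 x ∂ρ0)) := by
  set K := ∫ x, llr ρ0 ρ1 x ∂ρ0 with hKdef
  set G : X → ℝ≥0∞ := ρ1.rnDeriv ρ0 with hGdef
  have hGmeas : Measurable G := Measure.measurable_rnDeriv _ _
  have hGlt : ∀ᵐ x ∂ρ0, G x < ∞ := Measure.rnDeriv_lt_top _ _
  set g : X → ℝ := fun x => (G x).toReal with hgdef
  have hgmeas : Measurable g := hGmeas.ennreal_toReal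
  have hg_nonneg : ∀ x, 0 ≤ g x := fun x => ENNReal.toReal_nonneg
  have hg_int : Integrable g ρ0 := Measure.integrable_toReal_rnDeriv
  -- the test set
  set A : Set X := {x | φ x = true} with hAdef
  have hAm : MeasurableSet A := hφ (measurableSet_singleton true)
  have hAc : {x | φ x = false} = Aᶜ := by
    ext x
    simp [hAdef, Set.mem_compl_iff]
  -- min part
  set F : X → ℝ≥0∞ := fun x => min 1 (G x) with hFdef
  have hFmeas : Measurable F := measurable_const.min hGmeas
  have hF_le_one : ∀ x, F x ≤ 1 := fun x => min_le_left _ _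
  have hIF_le : ∫⁻ x, F x ∂ρ0 ≤ 1 := by
    calc ∫⁻ x, F x ∂ρ0 ≤ ∫⁻ _, 1 ∂ρ0 := lintegral_mono hF_le_one
    _ = 1 := by simp
  have hIF_ne : ∫⁻ x, F x ∂ρ0 ≠ ∞ := (hIF_le.trans_lt (by simp)).ne
  -- Cauchy-Schwarz step, in ℝ≥0∞
  set S : ℝ≥0∞ := ∫⁻ x, (G x) ^ (1/2 : ℝ) ∂ρ0 with hSdef
  have hmax_le : ∫⁻ x, max 1 (G x) ∂ρ0 ≤ 2 := by
    calc ∫⁻ x, max 1 (G x) ∂ρ0 ≤ ∫⁻ x, 1 + G x ∂ρ0 :=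
          lintegral_mono fun x => max_le le_self_add le_add_self
    _ = 1 + ∫⁻ x, G x ∂ρ0 := by rw [lintegral_add_left measurable_const]; simp
    _ ≤ 1 + 1 := by
          refine add_le_add le_rfl ?_
          calc ∫⁻ x, G x ∂ρ0 ≤ ρ1 Set.univ := Measure.lintegral_rnDeriv_le
          _ = 1 := measure_univ
    _ = 2 := one_add_one_eq_two
  have hCS : S ≤ (∫⁻ x, F x ∂ρ0) ^ (1/2 : ℝ) * 2 ^ (1/2 : ℝ) := by
    have hhold := ENNReal.lintegral_mul_norm_pow_le (μ := ρ0) (f := F)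
      (g := fun x => max 1 (G x))
      hFmeas.aemeasurable ((measurable_const.max hGmeas).aemeasurable)
      (by norm_num : (0:ℝ) ≤ 1/2) (by norm_num : (0:ℝ) ≤ 1/2) (by norm_num)
    have heq : ∀ x, F x ^ (1/2 : ℝ) * (max 1 (G x)) ^ (1/2 : ℝ) = (G x) ^ (1/2 : ℝ) := by
      intro x
      rw [← ENNReal.mul_rpow_of_nonneg _ _ (by norm_num : (0:ℝ) ≤ 1/2), hFdef]
      simp only [min_mul_max, one_mul]
    calc S = ∫⁻ x, F x ^ (1/2 : ℝ) * (max 1 (G x)) ^ (1/2 : ℝ) ∂ρ0 := by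
            rw [hSdef]; exact (lintegral_congr fun x => (heq x)).symm
    _ ≤ (∫⁻ x, F x ∂ρ0) ^ (1/2 : ℝ) * (∫⁻ x, max 1 (G x) ∂ρ0) ^ (1/2 : ℝ) := hhold
    _ ≤ (∫⁻ x, F x ∂ρ0) ^ (1/2 : ℝ) * 2 ^ (1/2 : ℝ) := by
          gcongr
  have hsqr : ∀ (x : ℝ≥0∞), x ^ (1/2 : ℝ) * x ^ (1/2 : ℝ) = x := by
    intro x
    rw [← ENNReal.rpow_add_of_nonneg _ _ (by norm_num) (by norm_num)]
    norm_num
  have hSS : S * S ≤ (∫⁻ x, F x ∂ρ0) * 2 := by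
    calc S * S ≤ ((∫⁻ x, F x ∂ρ0) ^ (1/2 : ℝ) * 2 ^ (1/2 : ℝ)) *
        ((∫⁻ x, F x ∂ρ0) ^ (1/2 : ℝ) * 2 ^ (1/2 : ℝ)) := mul_le_mul' hCS hCS
    _ = ((∫⁻ x, F x ∂ρ0) ^ (1/2 : ℝ) * (∫⁻ x, F x ∂ρ0) ^ (1/2 : ℝ)) *
        ((2 : ℝ≥0∞) ^ (1/2 : ℝ) * 2 ^ (1/2 : ℝ)) := by ring
    _ = (∫⁻ x, F x ∂ρ0) * 2 := by rw [hsqr, hsqr]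
  have hRHS_ne : (∫⁻ x, F x ∂ρ0) * 2 ≠ ∞ :=
    ENNReal.mul_ne_top hIF_ne (by simp)
  -- real versions
  have hSS_real : S.toReal * S.toReal ≤ (∫⁻ x, F x ∂ρ0).toReal * 2 := by
    have := ENNReal.toReal_mono hRHS_ne hSS
    rwa [ENNReal.toReal_mul, ENNReal.toReal_mul, ENNReal.toReal_ofNat] at this
  have hT_eq : ∫ x, Real.sqrt (g x) ∂ρ0 = S.toReal := by
    have hpt : ∀ x, Real.sqrt (g x) = ((G x) ^ (1/2 : ℝ)).toReal := fun x => by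
      rw [hgdef, Real.sqrt_eq_rpow, ENNReal.toReal_rpow]
    simp_rw [hpt]
    refine integral_toReal ((ENNReal.continuous_rpow_const.measurable.comp hGmeas).aemeasurable) ?_
    filter_upwards [hGlt] with x hx
    exact ENNReal.rpow_lt_top_of_nonneg (by norm_num) hx.ne
  have hIF_eq : ∫ x, min 1 (g x) ∂ρ0 = (∫⁻ x, F x ∂ρ0).toReal := by
    have hpt : ∀ᵐ x ∂ρ0, min 1 (g x) = (F x).toReal := by
      filter_upwards [hGlt] with x hx
      rw [hFdef]
      simp only [hgdef]
      rw [ENNReal.toReal_min (by simp) hx.ne, ENNReal.toReal_one]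
    rw [integral_congr_ae hpt]
    exact integral_toReal hFmeas.aemeasurable
      (ae_of_all _ fun x => (hF_le_one x).trans_lt (by simp))
  -- Jensen step
  have hllr : Integrable (llr ρ1 ρ0) ρ0 :=
    (integrable_congr (neg_llr hac')).mp hint.neg
  have hint_llr : ∫ x, llr ρ1 ρ0 x ∂ρ0 = -K := by
    have h1 := integral_congr_ae (neg_llr hac')
    have h2 : ∫ x, (-llr ρ0 ρ1) x ∂ρ0 = -K := by
      simp only [Pi.neg_apply]
      rw [integral_neg]
    rw [← h1, h2]
  have hexp_eq : (fun x => Real.exp ((1/2 : ℝ) * llr ρ1 ρ0 x)) =ᵐ[ρ0]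
      fun x => Real.sqrt (g x) := by
    filter_upwards [exp_llr_of_ac' ρ1 ρ0 hac'] with x hx
    have : (1/2 : ℝ) * llr ρ1 ρ0 x = llr ρ1 ρ0 x / 2 := by ring
    rw [this, Real.exp_half, hx]
  have hsqrt_int : Integrable (fun x => Real.sqrt (g x)) ρ0 := by
    refine Integrable.mono' ((integrable_const (1:ℝ)).add hg_int)
      ((Real.continuous_sqrt.measurable.comp hgmeas).aestronglyMeasurable)
      (ae_of_all _ fun x => ?_)
    rw [Real.norm_eq_abs, abs_of_nonneg (Real.sqrt_nonneg _)]
    simp only [Pi.add_apply]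
    nlinarith [Real.sq_sqrt (hg_nonneg x), Real.sqrt_nonneg (g x), hg_nonneg x]
  have hJ : Real.exp (-K/2) ≤ ∫ x, Real.sqrt (g x) ∂ρ0 := by
    have h1 : Integrable (fun x => (1/2 : ℝ) * llr ρ1 ρ0 x) ρ0 := hllr.const_mul _
    have h2 : Integrable (fun x => Real.exp ((1/2 : ℝ) * llr ρ1 ρ0 x)) ρ0 :=
      hsqrt_int.congr hexp_eq.symm
    have hjen := convexOn_exp.map_integral_le (f := fun x => (1/2 : ℝ) * llr ρ1 ρ0 x)
      (μ := ρ0) continuous_exp.continuousOn isClosed_univ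
      (ae_of_all _ fun x => Set.mem_univ _) h1 (by exact h2)
    rw [integral_congr_ae hexp_eq] at hjen
    have hval : ∫ x, (1/2 : ℝ) * llr ρ1 ρ0 x ∂ρ0 = -K/2 := by
      rw [integral_const_mul, hint_llr]; ring
    rw [hval] at hjen
    exact hjen
  -- test step
  have hmin_int : Integrable (fun x => min 1 (g x)) ρ0 := by
    refine Integrable.mono' (integrable_const (1:ℝ))
      ((measurable_const.min hgmeas).aestronglyMeasurable) (ae_of_all _ fun x => ?_)
    rw [Real.norm_eq_abs, abs_of_nonneg (le_min zero_le_one (hg_nonneg x))]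
    exact min_le_left _ _
  have hstepA : ∫ x, min 1 (g x) ∂ρ0 ≤ (ρ0 A).toReal + (ρ1 Aᶜ).toReal := by
    rw [← integral_add_compl hAm hmin_int]
    refine add_le_add ?_ ?_
    · calc ∫ x in A, min 1 (g x) ∂ρ0 ≤ ∫ _ in A, (1:ℝ) ∂ρ0 := by
            refine setIntegral_mono_on hmin_int.integrableOn
              ((integrableOn_const_iff (by simp)).mpr (Or.inr (measure_lt_top _ _))) hAm
              (fun x _ => min_le_left _ _)
      _ = (ρ0 A).toReal := by simp [Measure.real]
    · calc ∫ x in Aᶜ, min 1 (g x) ∂ρ0 ≤ ∫ x in Aᶜ, g x ∂ρ0 := by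
            refine setIntegral_mono_on hmin_int.integrableOn hg_int.integrableOn hAm.compl
              (fun x _ => min_le_right _ _)
      _ = (ρ1 Aᶜ).toReal := Measure.setIntegral_toReal_rnDeriv hac _
  -- assemble
  rw [hAc]
  have hexp2 : Real.exp (-K/2) * Real.exp (-K/2) = Real.exp (-K) := by
    rw [← Real.exp_add]; ring_nf
  have hJJ : Real.exp (-K/2) * Real.exp (-K/2) ≤ S.toReal * S.toReal := by
    rw [← hT_eq]
    exact mul_le_mul hJ hJ (Real.exp_pos _).le ((Real.exp_pos _).le.trans hJ)
  rw [hIF_eq] at hstepA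
  nlinarith [hSS_real, hJJ, hexp2, hstepA]
end

section
/- Fix σ > 0, c ∈ (0, 1/4), and let a = 128·log((e+1)/(ec)²) and Δ* = √(32e·σ²c·log((e+1)/(ec)²)). Define φ(Δ) = a·(σ²c/(4Δ²))·log(eΔ²/(σ²c)) − [exp(−Δ²/(8eσ²c)) + 1/e]. Then φ(Δ*) ≥ 0 and φ is monotone decreasing on the interval (√(eσ²c), Δ*]. -/
open Real Set

lemma dbcare_aux_hasDerivAt (σ c A : ℝ) (hσ : 0 < σ) (hc : 0 < c) {x : ℝ} (hx : 0 < x) :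
    HasDerivAt (fun Δ : ℝ =>
      A * (σ ^ 2 * c / (4 * Δ ^ 2) * Real.log (Real.exp 1 * Δ ^ 2 / (σ ^ 2 * c))) -
        (Real.exp (-Δ ^ 2 / (8 * Real.exp 1 * σ ^ 2 * c)) + 1 / Real.exp 1))
      (-(A * (σ ^ 2 * c) / (2 * x ^ 3)) * Real.log (x ^ 2 / (σ ^ 2 * c))
        + x / (4 * Real.exp 1 * (σ ^ 2 * c)) *
          Real.exp (-x ^ 2 / (8 * Real.exp 1 * σ ^ 2 * c))) x := by
  have hs : (0:ℝ) < σ ^ 2 * c := by positivity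
  have hxne : x ≠ 0 := ne_of_gt hx
  have h1 : HasDerivAt (fun Δ : ℝ => 4 * Δ ^ 2) (4 * (2 * x ^ 1)) x :=
    (hasDerivAt_pow 2 x).const_mul 4
  have h2 := (hasDerivAt_const x (σ ^ 2 * c)).div h1 (by positivity)
  have h3 : HasDerivAt (fun Δ : ℝ => Real.exp 1 * Δ ^ 2 / (σ ^ 2 * c))
      (Real.exp 1 * (2 * x ^ 1) / (σ ^ 2 * c)) x :=
    ((hasDerivAt_pow 2 x).const_mul (Real.exp 1)).div_const _
  have h4 := h3.log (by positivity)
  have h5 := (h2.mul h4).const_mul A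
  have h6 : HasDerivAt (fun Δ : ℝ => -Δ ^ 2 / (8 * Real.exp 1 * σ ^ 2 * c))
      (-(2 * x ^ 1) / (8 * Real.exp 1 * σ ^ 2 * c)) x :=
    ((hasDerivAt_pow 2 x).neg).div_const _
  have h7 := (h6.exp).add_const (1 / Real.exp 1)
  have h8 := h5.sub h7
  refine h8.congr_deriv ?_
  have hlog : Real.log (Real.exp 1 * x ^ 2 / (σ ^ 2 * c))
      = 1 + Real.log (x ^ 2 / (σ ^ 2 * c)) := by
    rw [mul_div_assoc, Real.log_mul (Real.exp_ne_zero 1) (by positivity), Real.log_exp]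
  rw [hlog]
  simp only [Pi.div_apply]
  have he : Real.exp 1 ≠ 0 := Real.exp_ne_zero 1
  field_simp
  ring

lemma dbcare_derivval_nonpos (σ c A : ℝ) (hσ : 0 < σ) (hc : 0 < c) (hA : (256:ℝ) ≤ A)
    {x : ℝ} (hxpos : 0 < x) (hx2 : Real.exp 1 * σ ^ 2 * c < x ^ 2) :
    -(A * (σ ^ 2 * c) / (2 * x ^ 3)) * Real.log (x ^ 2 / (σ ^ 2 * c))
      + x / (4 * Real.exp 1 * (σ ^ 2 * c)) *
        Real.exp (-x ^ 2 / (8 * Real.exp 1 * σ ^ 2 * c)) ≤ 0 := by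
  have he0 : (0:ℝ) < Real.exp 1 := Real.exp_pos 1
  have heL : Real.exp 1 < 2.7182818286 := Real.exp_one_lt_d9
  have hs : (0:ℝ) < σ ^ 2 * c := by positivity
  have hl1 : (1:ℝ) ≤ Real.log (x ^ 2 / (σ ^ 2 * c)) := by
    rw [Real.le_log_iff_exp_le (by positivity), le_div_iff₀ hs]
    nlinarith
  have hu : (0:ℝ) < x ^ 2 / (8 * Real.exp 1 * σ ^ 2 * c) := by positivity
  have hEb : Real.exp (-x ^ 2 / (8 * Real.exp 1 * σ ^ 2 * c))
      ≤ 128 * Real.exp 1 ^ 2 * (σ ^ 2 * c) ^ 2 / x ^ 4 := by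
    have hq := Real.quadratic_le_exp_of_nonneg hu.le
    have h1 : (x ^ 2 / (8 * Real.exp 1 * σ ^ 2 * c)) ^ 2 / 2
        ≤ Real.exp (x ^ 2 / (8 * Real.exp 1 * σ ^ 2 * c)) := by nlinarith
    have h2 : Real.exp (-x ^ 2 / (8 * Real.exp 1 * σ ^ 2 * c))
        = (Real.exp (x ^ 2 / (8 * Real.exp 1 * σ ^ 2 * c)))⁻¹ := by
      rw [← Real.exp_neg]; ring_nf
    rw [h2]
    have h3 : (Real.exp (x ^ 2 / (8 * Real.exp 1 * σ ^ 2 * c)))⁻¹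
        ≤ ((x ^ 2 / (8 * Real.exp 1 * σ ^ 2 * c)) ^ 2 / 2)⁻¹ :=
      inv_anti₀ (by positivity) h1
    refine h3.trans (le_of_eq ?_)
    have hxne : x ≠ 0 := ne_of_gt hxpos
    have hre2 : Real.exp 2 = Real.exp 1 ^ 2 := by
      rw [show (2:ℝ) = 1 + 1 by norm_num, Real.exp_add]; ring
    field_simp
    ring
  have ht1 : x / (4 * Real.exp 1 * (σ ^ 2 * c)) *
        Real.exp (-x ^ 2 / (8 * Real.exp 1 * σ ^ 2 * c))
      ≤ x / (4 * Real.exp 1 * (σ ^ 2 * c)) *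
        (128 * Real.exp 1 ^ 2 * (σ ^ 2 * c) ^ 2 / x ^ 4) :=
    mul_le_mul_of_nonneg_left hEb (by positivity)
  have ht2 : x / (4 * Real.exp 1 * (σ ^ 2 * c)) *
        (128 * Real.exp 1 ^ 2 * (σ ^ 2 * c) ^ 2 / x ^ 4)
      = 32 * Real.exp 1 * (σ ^ 2 * c) / x ^ 3 := by
    have hxne : x ≠ 0 := ne_of_gt hxpos
    have hre2 : Real.exp 2 = Real.exp 1 ^ 2 := by
      rw [show (2:ℝ) = 1 + 1 by norm_num, Real.exp_add]; ring
    field_simp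
    ring
  have ht3 : 32 * Real.exp 1 * (σ ^ 2 * c) / x ^ 3 ≤ A * (σ ^ 2 * c) / (2 * x ^ 3) := by
    rw [div_le_div_iff₀ (by positivity) (by positivity)]
    nlinarith [mul_nonneg (sub_nonneg.mpr hA) (mul_pos hs (pow_pos hxpos 3)).le,
      mul_nonneg (show (0:ℝ) ≤ 4 - Real.exp 1 by linarith)
        (mul_pos hs (pow_pos hxpos 3)).le]
  have ht4 : A * (σ ^ 2 * c) / (2 * x ^ 3)
      ≤ A * (σ ^ 2 * c) / (2 * x ^ 3) * Real.log (x ^ 2 / (σ ^ 2 * c)) :=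
    le_mul_of_one_le_right
      (div_nonneg (mul_nonneg (by linarith) hs.le) (by positivity)) hl1
  nlinarith [ht1, ht2, ht3, ht4]

lemma dbcare_endpoint_aux (σ c L D : ℝ) (hσ : 0 < σ) (hc : 0 < c) (hL : (2:ℝ) ≤ L)
    (hD2 : D ^ 2 = 32 * Real.exp 1 * σ ^ 2 * c * L) :
    0 ≤ (128 * L) * (σ ^ 2 * c / (4 * D ^ 2) *
        Real.log (Real.exp 1 * D ^ 2 / (σ ^ 2 * c))) -
      (Real.exp (-D ^ 2 / (8 * Real.exp 1 * σ ^ 2 * c)) + 1 / Real.exp 1) := by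
  have he0 : (0:ℝ) < Real.exp 1 := Real.exp_pos 1
  have heL : Real.exp 1 < 2.7182818286 := Real.exp_one_lt_d9
  have heG : (2.7182818283:ℝ) < Real.exp 1 := Real.exp_one_gt_d9
  have hs : (0:ℝ) < σ ^ 2 * c := by positivity
  have hL0 : (0:ℝ) < L := by linarith
  have hre2 : Real.exp 2 = Real.exp 1 ^ 2 := by
    rw [show (2:ℝ) = 1 + 1 by norm_num, Real.exp_add]; ring
  rw [hD2]
  have harg : Real.exp 1 * (32 * Real.exp 1 * σ ^ 2 * c * L) / (σ ^ 2 * c)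
      = 32 * Real.exp 1 ^ 2 * L := by field_simp
  have hexparg : -(32 * Real.exp 1 * σ ^ 2 * c * L) / (8 * Real.exp 1 * σ ^ 2 * c)
      = -(4 * L) := by field_simp; ring
  have hcoef : σ ^ 2 * c / (4 * (32 * Real.exp 1 * σ ^ 2 * c * L))
      = 1 / (128 * Real.exp 1 * L) := by field_simp; ring
  rw [harg, hexparg, hcoef]
  have hlog5 : (5:ℝ) ≤ Real.log (32 * Real.exp 1 ^ 2 * L) := by
    rw [Real.le_log_iff_exp_le (by positivity)]
    have h5 : Real.exp 5 = Real.exp 1 ^ 5 := by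
      rw [show (5:ℝ) = 1 + 1 + 1 + 1 + 1 by norm_num]
      rw [Real.exp_add, Real.exp_add, Real.exp_add, Real.exp_add]; ring
    rw [h5]
    have hE3 : Real.exp 1 ^ 3 < 21 := by nlinarith
    have h1 : Real.exp 1 ^ 5 ≤ 21 * Real.exp 1 ^ 2 := by nlinarith [pow_pos he0 2]
    have h2 : (21:ℝ) * Real.exp 1 ^ 2 ≤ 32 * Real.exp 1 ^ 2 * L := by
      nlinarith [pow_pos he0 2]
    linarith
  have hexple : Real.exp (-(4 * L)) ≤ 1 := by
    rw [show (1:ℝ) = Real.exp 0 from (Real.exp_zero).symm]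
    exact Real.exp_le_exp.mpr (by linarith)
  have hsimp : 128 * L * (1 / (128 * Real.exp 1 * L) *
        Real.log (32 * Real.exp 1 ^ 2 * L))
      = Real.log (32 * Real.exp 1 ^ 2 * L) / Real.exp 1 := by
    field_simp
    try rw [hre2]
    try ring
  rw [hsimp]
  have h1 : 5 / Real.exp 1 ≤ Real.log (32 * Real.exp 1 ^ 2 * L) / Real.exp 1 := by gcongr
  have h2 : (1:ℝ) ≤ 4 / Real.exp 1 := by rw [le_div_iff₀ he0]; linarith
  have h3 : (4:ℝ) / Real.exp 1 = 5 / Real.exp 1 - 1 / Real.exp 1 := by ring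
  linarith

/-- Endpoint-and-monotonicity argument for the 2-arm DBCARE misidentification
bound: with a = 128·log((e+1)/(ec)²) and Δ* = √(32e·σ²c·log((e+1)/(ec)²)), the
function φ(Δ) = a·(σ²c/(4Δ²))·log(eΔ²/(σ²c)) − [exp(−Δ²/(8eσ²c)) + 1/e]
satisfies φ(Δ*) ≥ 0 and is monotone decreasing on (√(eσ²c), Δ*]. -/
theorem dbcare_mi_endpoint (σ c : ℝ) (hσ : 0 < σ) (hc : 0 < c) (hc' : c < 1 / 4) :
    let a : ℝ := 128 * Real.log ((Real.exp 1 + 1) / (Real.exp 1 * c) ^ 2)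
    let Δstar : ℝ :=
      Real.sqrt (32 * Real.exp 1 * σ ^ 2 * c * Real.log ((Real.exp 1 + 1) / (Real.exp 1 * c) ^ 2))
    let φ : ℝ → ℝ := fun Δ =>
      a * (σ ^ 2 * c / (4 * Δ ^ 2) * Real.log (Real.exp 1 * Δ ^ 2 / (σ ^ 2 * c))) -
        (Real.exp (-Δ ^ 2 / (8 * Real.exp 1 * σ ^ 2 * c)) + 1 / Real.exp 1)
    0 ≤ φ Δstar ∧ AntitoneOn φ (Ioc (Real.sqrt (Real.exp 1 * σ ^ 2 * c)) Δstar) := by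
  intro a Δstar φ
  have he0 : (0:ℝ) < Real.exp 1 := Real.exp_pos 1
  have heL : Real.exp 1 < 2.7182818286 := Real.exp_one_lt_d9
  have heG : (2.7182818283:ℝ) < Real.exp 1 := Real.exp_one_gt_d9
  have hbase : (0:ℝ) < (Real.exp 1 + 1) / (Real.exp 1 * c) ^ 2 := by positivity
  have hL2 : (2:ℝ) ≤ Real.log ((Real.exp 1 + 1) / (Real.exp 1 * c) ^ 2) := by
    rw [Real.le_log_iff_exp_le hbase, le_div_iff₀ (by positivity)]
    have hE2 : Real.exp 2 = Real.exp 1 ^ 2 := by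
      rw [show (2:ℝ) = 1 + 1 by norm_num, Real.exp_add]; ring
    rw [hE2]
    have hE2' : Real.exp 1 ^ 2 < 7.39 := by nlinarith
    have hE4 : Real.exp 1 ^ 4 < 54.61 := by nlinarith
    have hc2 : c ^ 2 < 1 / 16 := by nlinarith
    have h1 : Real.exp 1 ^ 4 * c ^ 2 ≤ 54.61 * c ^ 2 :=
      mul_le_mul_of_nonneg_right hE4.le (sq_nonneg c)
    have h2 : (54.61 : ℝ) * c ^ 2 ≤ 54.61 * (1 / 16) := by nlinarith
    nlinarith
  have hΔ2 : Δstar ^ 2 = 32 * Real.exp 1 * σ ^ 2 * c *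
      Real.log ((Real.exp 1 + 1) / (Real.exp 1 * c) ^ 2) :=
    Real.sq_sqrt (mul_nonneg (by positivity) (by linarith))
  have ha256 : (256:ℝ) ≤ a := by
    show (256:ℝ) ≤ 128 * Real.log ((Real.exp 1 + 1) / (Real.exp 1 * c) ^ 2)
    linarith
  constructor
  · exact dbcare_endpoint_aux σ c _ Δstar hσ hc hL2 hΔ2
  · have hsqrtpos : 0 < Real.sqrt (Real.exp 1 * σ ^ 2 * c) :=
      Real.sqrt_pos.mpr (by positivity)
    apply antitoneOn_of_deriv_nonpos (convex_Ioc _ _)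
    · intro x hx
      have hxpos : 0 < x := lt_trans hsqrtpos hx.1
      exact (dbcare_aux_hasDerivAt σ c a hσ hc
        hxpos).differentiableAt.continuousAt.continuousWithinAt
    · rw [interior_Ioc]
      intro x hx
      exact (dbcare_aux_hasDerivAt σ c a hσ hc
        (lt_trans hsqrtpos hx.1)).differentiableAt.differentiableWithinAt
    · rw [interior_Ioc]
      intro x hx
      have hxpos : 0 < x := lt_trans hsqrtpos hx.1
      have hx2 : Real.exp 1 * σ ^ 2 * c < x ^ 2 := by
        nlinarith [Real.sq_sqrt (show (0:ℝ) ≤ Real.exp 1 * σ ^ 2 * c by positivity),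
          Real.sqrt_nonneg (Real.exp 1 * σ ^ 2 * c), hx.1]
      have hd : deriv φ x = -(a * (σ ^ 2 * c) / (2 * x ^ 3)) *
            Real.log (x ^ 2 / (σ ^ 2 * c))
          + x / (4 * Real.exp 1 * (σ ^ 2 * c)) *
            Real.exp (-x ^ 2 / (8 * Real.exp 1 * σ ^ 2 * c)) :=
        (dbcare_aux_hasDerivAt σ c a hσ hc hxpos).deriv
      rw [hd]
      exact dbcare_derivval_nonpos σ c a hσ hc ha256 hxpos hx2
end
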